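/- arXiv:2301.05416 — 3 statements merged into one kernel-verified Lean document; each statement's English description precedes it below -/
import Mathlib

section
/- For any graph G with n vertices and m edges, the spectral radius satisfies ρ(G) ≤ √(2m − n + 1), with equality if and only if G is the star K_{1,n−1} or the complete graph K_n. -/
attribute [local instance] Classical.propDecidable

/-- The spectral radius (largest eigenvalue) of a real symmetric matrix,
as the supremum of its real spectrum. -/
noncomputable def specRad {V : Type*} [Fintype V] [DecidableEq V] (A : Matrix V V ℝ) : ℝ :=
  sSup (spectrum ℝ A)

/-!
Let `x` be an eigenvector of `A = A(G)` for the eigenvalue `μ`, scaled so that it attains a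
positive maximum `x v`. Then
`μ² x v = (A² x) v = ∑_{w ~ v} ∑_{u ~ w} x u ≤ (∑_{w ~ v} d w) x v`,
and `∑_{w ~ v} d w ≤ 2m - n + 1` since `2m = ∑_u d u` and each of the `n - 1 - d v` vertices
outside the closed neighbourhood of `v` has degree at least one in a connected graph.

If `ρ² = 2m - n + 1`, take `μ = ρ`: both inequalities are then equalities at every vertex where
`x` is maximal, so the set `S` of these vertices is closed under walks of length two, and every
vertex outside the closed neighbourhood of a vertex of `S` is a leaf. A short case analysis shows
that a connected graph with such a set `S` is a star or complete. Conversely, `K_{1,n-1}` and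
`K_n` have the eigenvalues `√(n - 1)` and `n - 1`, which are the bound.
-/

open Finset Matrix SimpleGraph

namespace Matrix

variable {V : Type*} [Fintype V] [DecidableEq V]

theorem mem_spectrum_iff_exists_mulVec_eq_smul {A : Matrix V V ℝ} {μ : ℝ} :
    μ ∈ spectrum ℝ A ↔ ∃ x : V → ℝ, x ≠ 0 ∧ A *ᵥ x = μ • x := by
  rw [← spectrum_toLin', ← Module.End.hasEigenvalue_iff_mem_spectrum]
  constructor
  · intro h
    obtain ⟨x, hx⟩ := h.exists_hasEigenvector
    exact ⟨x, hx.2, Module.End.mem_eigenspace_iff.mp hx.1⟩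
  · rintro ⟨x, hx, hAx⟩
    exact Module.End.hasEigenvalue_of_hasEigenvector ⟨Module.End.mem_eigenspace_iff.mpr hAx, hx⟩

theorem exists_eigenvector_pos_max_of_mem_spectrum {A : Matrix V V ℝ} {μ : ℝ}
    (hμ : μ ∈ spectrum ℝ A) :
    ∃ (x : V → ℝ) (v : V), A *ᵥ x = μ • x ∧ 0 < x v ∧ ∀ u, x u ≤ x v := by
  obtain ⟨x, hx, hAx⟩ := mem_spectrum_iff_exists_mulVec_eq_smul.mp hμ
  obtain ⟨u₀, hu₀⟩ := Function.ne_iff.mp hx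
  have : Nonempty V := ⟨u₀⟩
  obtain ⟨v, hv⟩ := Finite.exists_max fun u => |x u|
  -- `v` maximises `|x|`, so `x v • x` attains its maximum `(x v)²` at `v`.
  refine ⟨x v • x, v, by rw [mulVec_smul, hAx, smul_comm], ?_, fun u => ?_⟩
  · have : 0 < |x v| := (abs_pos.mpr hu₀).trans_le (hv u₀)
    simpa [← sq, sq_abs] using pow_pos this 2
  · calc x v * x u ≤ |x v| * |x u| := by rw [← abs_mul]; exact le_abs_self _
      _ ≤ |x v| * |x v| := mul_le_mul_of_nonneg_left (hv u) (abs_nonneg _)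
      _ = x v * x v := abs_mul_abs_self _

end Matrix

section SpecRad

variable {V : Type*} [Fintype V] [DecidableEq V] {A : Matrix V V ℝ}

theorem le_specRad {μ : ℝ} (hμ : μ ∈ spectrum ℝ A) : μ ≤ specRad A :=
  le_csSup A.finite_spectrum.bddAbove hμ

theorem specRad_mem_spectrum [Nonempty V] (hA : A.IsHermitian) : specRad A ∈ spectrum ℝ A :=
  Set.Nonempty.csSup_mem ⟨_, hA.eigenvalues_mem_spectrum_real (Classical.arbitrary V)⟩
    A.finite_spectrum

end SpecRad

namespace SimpleGraph

variable {V : Type*}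

theorem completeBipartiteGraph_fin_one_eq_starGraph (W : Type*) :
    completeBipartiteGraph (Fin 1) W = starGraph (Sum.inl 0) := by
  ext (a | a) (b | b) <;> simp [Fin.fin_one_eq_zero]

theorem nonempty_iso_starGraph_iff [Fintype V] {G : SimpleGraph V} {W : Type*} [Fintype W]
    (r : W) (hcard : Fintype.card V = Fintype.card W) :
    Nonempty (G ≃g starGraph r) ↔ ∃ c, G = starGraph c := by
  constructor
  · rintro ⟨e⟩
    refine ⟨e.symm r, ?_⟩
    ext a b
    rw [← e.map_adj_iff, starGraph_adj, starGraph_adj, e.injective.ne_iff, e.eq_symm_apply,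
      e.eq_symm_apply]
  · rintro ⟨c, rfl⟩
    let F := Fintype.equivOfCardEq hcard
    let E := F.trans (Equiv.swap (F c) r)
    have hE : E c = r := Equiv.swap_apply_left _ _
    refine ⟨⟨E, fun {a b} => ?_⟩⟩
    rw [starGraph_adj, starGraph_adj, ← hE, E.injective.ne_iff, E.injective.eq_iff,
      E.injective.eq_iff]

section Spectrum

variable [Fintype V] [DecidableEq V]

theorem sqrt_mem_spectrum_adjMatrix_starGraph (c : V) :
    √(Fintype.card V - 1 : ℝ) ∈ spectrum ℝ ((starGraph c).adjMatrix ℝ) := by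
  set s := √(Fintype.card V - 1 : ℝ)
  rw [mem_spectrum_iff_exists_mulVec_eq_smul]
  -- The eigenvector `(s, 1, …, 1)` divided by `s`, which stays nonzero when `s = 0`.
  refine ⟨fun u => if u = c then 1 else s⁻¹, Function.ne_iff.mpr ⟨c, by simp⟩,
    funext fun v => ?_⟩
  rw [adjMatrix_mulVec_apply, Pi.smul_apply, smul_eq_mul]
  by_cases hv : v = c
  · subst hv
    have : Nonempty V := ⟨v⟩
    have hs : ((starGraph v).degree v : ℝ) = s * s := by
      rw [degree_starGraph_center, Nat.cast_sub Fintype.card_pos, Nat.cast_one,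
        Real.mul_self_sqrt (sub_nonneg.mpr (Nat.one_le_cast.mpr Fintype.card_pos))]
    calc ∑ u ∈ (starGraph v).neighborFinset v, (if u = v then 1 else s⁻¹)
        = ∑ u ∈ (starGraph v).neighborFinset v, s⁻¹ :=
          sum_congr rfl fun u hu => if_neg ((mem_neighborFinset _ _ _).mp hu).ne'
      _ = s * s * s⁻¹ := by rw [sum_const, card_neighborFinset_eq_degree, nsmul_eq_mul, hs]
      _ = s * if v = v then 1 else s⁻¹ := by rw [mul_self_mul_inv, if_pos rfl, mul_one]
  · have : Nontrivial V := nontrivial_of_ne v c hv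
    have hs : s ≠ 0 := by
      have : (1 : ℝ) < Fintype.card V := by exact_mod_cast Fintype.one_lt_card
      exact (Real.sqrt_pos.mpr (by linarith)).ne'
    have hN : (starGraph c).neighborFinset v = {c} := by
      ext u
      simp only [mem_neighborFinset, starGraph_adj, mem_singleton]
      grind
    rw [hN, sum_singleton, if_pos rfl, if_neg hv, mul_inv_cancel₀ hs]

theorem sqrt_mem_spectrum_adjMatrix_top [Nonempty V] :
    √(2 * #(⊤ : SimpleGraph V).edgeFinset - Fintype.card V + 1 : ℝ) ∈
      spectrum ℝ ((⊤ : SimpleGraph V).adjMatrix ℝ) := by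
  have hn : (1 : ℝ) ≤ Fintype.card V := Nat.one_le_cast.mpr Fintype.card_pos
  have hm : 2 * (#(⊤ : SimpleGraph V).edgeFinset : ℝ) - Fintype.card V + 1 =
      (Fintype.card V - 1) ^ 2 := by
    rw [card_edgeFinset_top_eq_card_choose_two, Nat.cast_choose_two]
    ring
  rw [hm, Real.sqrt_sq (by linarith), mem_spectrum_iff_exists_mulVec_eq_smul]
  refine ⟨Function.const V 1, Function.ne_iff.mpr ⟨Classical.arbitrary V, one_ne_zero⟩,
    funext fun v => ?_⟩
  rw [adjMatrix_mulVec_const_apply_of_regular IsRegularOfDegree.top]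
  simp [Nat.cast_sub Fintype.card_pos]

end Spectrum

variable [Fintype V] {G : SimpleGraph V} [DecidableRel G.Adj]

section Leaves

theorem eq_of_adj_of_degree_eq_one {a b c : V} (ha : G.degree a = 1) (hab : G.Adj a b)
    (hac : G.Adj a c) : c = b :=
  (degree_eq_one_iff_existsUnique_adj.mp ha).unique hac hab

theorem eq_or_eq_of_adj_of_degree_eq_one (hG : G.Connected) {a b : V} (hab : G.Adj a b)
    (ha : G.degree a = 1) (hb : G.degree b = 1) (u : V) : u = a ∨ u = b := by
  by_contra! hu
  obtain ⟨d, -, hd, hd'⟩ :=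
    (hG a u).some.exists_boundary_dart {a, b} (by simp) (by simpa [not_or] using hu)
  rcases hd with hd | hd
  · exact hd' (.inr (eq_of_adj_of_degree_eq_one ha hab (hd ▸ d.adj)))
  · exact hd' (.inl (eq_of_adj_of_degree_eq_one hb hab.symm (hd ▸ d.adj)))

theorem eq_starGraph_of_forall_ne_degree_eq_one (hG : G.Connected) {c : V}
    (h : ∀ u, u ≠ c → G.degree u = 1) : G = starGraph c := by
  have hedge : ∀ a b, G.Adj a b → a = c ∨ b = c := by
    intro a b hab
    by_contra! hc
    rcases eq_or_eq_of_adj_of_degree_eq_one hG hab (h a hc.1) (h b hc.2) c with rfl | rfl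
    exacts [hc.1 rfl, hc.2 rfl]
  ext a b
  rw [starGraph_adj]
  refine ⟨fun hab => ⟨hab.ne, hedge a b hab⟩, ?_⟩
  suffices ∀ u, u ≠ c → G.Adj u c by
    rintro ⟨hab, rfl | rfl⟩
    exacts [(this b hab.symm).symm, this a hab]
  intro u hu
  obtain ⟨y, hy, -⟩ := degree_eq_one_iff_existsUnique_adj.mp (h u hu)
  exact (hedge u y hy).resolve_left hu ▸ hy

variable {S : Set V}

theorem exists_eq_starGraph_of_mem_of_degree_eq_one (hG : G.Connected)
    (hleaf : ∀ v ∈ S, ∀ u, u ≠ v → ¬G.Adj v u → G.degree u = 1) {a : V} (haS : a ∈ S)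
    (ha : G.degree a = 1) : ∃ c, G = starGraph c := by
  obtain ⟨z, -, hz⟩ := degree_eq_one_iff_existsUnique_adj.mp ha
  refine ⟨z, eq_starGraph_of_forall_ne_degree_eq_one hG fun u hu => ?_⟩
  by_cases hua : u = a
  · exact hua ▸ ha
  · exact hleaf a haS u hua fun hau => hu (hz u hau)

theorem exists_eq_starGraph_or_eq_top (hG : G.Connected) {v₀ : V} (hv₀ : v₀ ∈ S)
    (hcl : ∀ v ∈ S, ∀ w u, G.Adj v w → G.Adj w u → u ∈ S)
    (hleaf : ∀ v ∈ S, ∀ u, u ≠ v → ¬G.Adj v u → G.degree u = 1) :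
    (∃ c, G = starGraph c) ∨ G = ⊤ := by
  by_cases htop : G = ⊤
  · exact .inr htop
  refine .inl ?_
  obtain ⟨p, q, hpq, hnadj⟩ : ∃ p q, p ≠ q ∧ ¬G.Adj p q := by
    by_contra! h
    exact htop (eq_top_iff.mpr fun p q hpq => h p q hpq)
  by_cases huniv : ∀ u, u ≠ v₀ → G.Adj v₀ u
  · by_cases hleaves : ∀ u, u ≠ v₀ → G.degree u = 1
    · exact ⟨v₀, eq_starGraph_of_forall_ne_degree_eq_one hG hleaves⟩
    -- A vertex `a ≠ v₀` that is not a leaf lies in `S`, and then so does every vertex.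
    push Not at hleaves
    obtain ⟨a, hav₀, hda⟩ := hleaves
    obtain ⟨w, hwv₀, haw⟩ : ∃ w, w ≠ v₀ ∧ G.Adj a w := by
      by_contra! h
      exact hda (degree_eq_one_iff_existsUnique_adj.mpr
        ⟨v₀, (huniv a hav₀).symm, fun w haw => by_contra fun hw => h w hw haw⟩)
    have haS : a ∈ S := hcl v₀ hv₀ w a (huniv w hwv₀) haw.symm
    have hS : ∀ u, u ∈ S := fun u => by
      by_cases hu : u = v₀
      · exact hu ▸ hv₀
      · exact hcl a haS v₀ u (huniv a hav₀).symm (huniv u hu)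
    exact exists_eq_starGraph_of_mem_of_degree_eq_one hG hleaf (hS p)
      (hleaf q (hS q) p hpq fun h => hnadj h.symm)
  · push Not at huniv
    obtain ⟨w₀, hw₀v₀, hv₀w₀⟩ := huniv
    have hw₀ := hleaf v₀ hv₀ w₀ hw₀v₀ hv₀w₀
    obtain ⟨z, hw₀z, -⟩ := degree_eq_one_iff_existsUnique_adj.mp hw₀
    by_cases hv₀z : G.Adj v₀ z
    · exact exists_eq_starGraph_of_mem_of_degree_eq_one hG hleaf
        (hcl v₀ hv₀ z w₀ hv₀z hw₀z.symm) hw₀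
    -- Otherwise `w₀` and `z` are adjacent leaves, which cannot be joined to `v₀`.
    · have hzv₀ : z ≠ v₀ := by rintro rfl; exact hv₀w₀ hw₀z.symm
      have hz := hleaf v₀ hv₀ z hzv₀ hv₀z
      rcases eq_or_eq_of_adj_of_degree_eq_one hG hw₀z hw₀ hz v₀ with h | h
      exacts [(hw₀v₀ h.symm).elim, (hzv₀ h.symm).elim]

end Leaves

section Eigenvector

variable {μ : ℝ} {x : V → ℝ}

theorem sq_mul_eq_sum_sum (hx : G.adjMatrix ℝ *ᵥ x = μ • x) (v : V) :
    μ ^ 2 * x v = ∑ w ∈ G.neighborFinset v, ∑ u ∈ G.neighborFinset w, x u := by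
  have h2 : G.adjMatrix ℝ *ᵥ (G.adjMatrix ℝ *ᵥ x) = μ ^ 2 • x := by
    rw [hx, mulVec_smul, hx, smul_smul, sq]
  rw [← smul_eq_mul, ← Pi.smul_apply, ← h2, adjMatrix_mulVec_apply]
  simp only [adjMatrix_mulVec_apply]

theorem sum_degree_mul_sub_sq_mul_eq (hx : G.adjMatrix ℝ *ᵥ x = μ • x) (v : V) :
    (∑ w ∈ G.neighborFinset v, (G.degree w : ℝ)) * x v - μ ^ 2 * x v =
      ∑ w ∈ G.neighborFinset v, ∑ u ∈ G.neighborFinset w, (x v - x u) := by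
  rw [sq_mul_eq_sum_sum hx v, sum_mul, ← sum_sub_distrib]
  refine sum_congr rfl fun w _ => ?_
  rw [sum_sub_distrib, sum_const, card_neighborFinset_eq_degree, nsmul_eq_mul]

theorem sq_le_sum_degree_of_forall_le (hx : G.adjMatrix ℝ *ᵥ x = μ • x) {v : V}
    (hpos : 0 < x v) (hmax : ∀ u, x u ≤ x v) :
    μ ^ 2 ≤ ∑ w ∈ G.neighborFinset v, (G.degree w : ℝ) := by
  have h := sum_degree_mul_sub_sq_mul_eq hx v
  have h0 : 0 ≤ ∑ w ∈ G.neighborFinset v, ∑ u ∈ G.neighborFinset w, (x v - x u) :=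
    sum_nonneg fun w _ => sum_nonneg fun u _ => sub_nonneg.mpr (hmax u)
  exact le_of_mul_le_mul_right (by linarith) hpos

theorem eq_of_adj_of_adj_of_sq_eq_sum_degree (hx : G.adjMatrix ℝ *ᵥ x = μ • x) {v : V}
    (hmax : ∀ u, x u ≤ x v) (heq : μ ^ 2 = ∑ w ∈ G.neighborFinset v, (G.degree w : ℝ))
    {w u : V} (hvw : G.Adj v w) (hwu : G.Adj w u) : x u = x v := by
  have h := sum_degree_mul_sub_sq_mul_eq hx v
  rw [← heq, sub_self, eq_comm, sum_eq_zero_iff_of_nonneg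
    fun w _ => sum_nonneg fun u _ => sub_nonneg.mpr (hmax u)] at h
  have h' := (sum_eq_zero_iff_of_nonneg fun u _ => sub_nonneg.mpr (hmax u)).mp
    (h w ((G.mem_neighborFinset v w).mpr hvw)) u ((G.mem_neighborFinset w u).mpr hwu)
  linarith

end Eigenvector

variable [DecidableEq V]

section DegreeSum

theorem sum_degree_neighborFinset_add_sum_compl (v : V) :
    ∑ w ∈ G.neighborFinset v, (G.degree w : ℝ) + (Fintype.card V - 1) +
      ∑ u ∈ (insert v (G.neighborFinset v))ᶜ, ((G.degree u : ℝ) - 1) =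
      2 * #G.edgeFinset := by
  have hsum := G.sum_degrees_eq_twice_card_edges
  rw [← sum_add_sum_compl (insert v (G.neighborFinset v)),
    sum_insert (G.notMem_neighborFinset_self v)] at hsum
  have hcard := card_compl_add_card (insert v (G.neighborFinset v))
  rw [card_insert_of_notMem (G.notMem_neighborFinset_self v), card_neighborFinset_eq_degree]
    at hcard
  rw [sum_sub_distrib, sum_const, nsmul_one]
  have hsumR := congrArg (Nat.cast (R := ℝ)) hsum
  have hcardR := congrArg (Nat.cast (R := ℝ)) hcard
  push_cast at hsumR hcardR
  linarith

theorem degree_sub_one_nonneg_of_mem_compl (hG : G.Connected) {v u : V}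
    (hu : u ∈ (insert v (G.neighborFinset v))ᶜ) : 0 ≤ (G.degree u : ℝ) - 1 :=
  sub_nonneg.mpr <| Nat.one_le_cast.mpr <|
    (hG u v).degree_pos_left fun h => mem_compl.mp hu (by simp [h])

theorem sum_degree_neighborFinset_le (hG : G.Connected) (v : V) :
    ∑ w ∈ G.neighborFinset v, (G.degree w : ℝ) ≤
      2 * #G.edgeFinset - Fintype.card V + 1 := by
  have h0 : 0 ≤ ∑ u ∈ (insert v (G.neighborFinset v))ᶜ, ((G.degree u : ℝ) - 1) :=
    sum_nonneg fun u hu => degree_sub_one_nonneg_of_mem_compl hG hu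
  linarith [G.sum_degree_neighborFinset_add_sum_compl v]

theorem degree_eq_one_of_sum_degree_neighborFinset_eq (hG : G.Connected) {v : V}
    (h : ∑ w ∈ G.neighborFinset v, (G.degree w : ℝ) = 2 * #G.edgeFinset - Fintype.card V + 1)
    {u : V} (huv : u ≠ v) (hvu : ¬G.Adj v u) : G.degree u = 1 := by
  have hR : ∑ u ∈ (insert v (G.neighborFinset v))ᶜ, ((G.degree u : ℝ) - 1) = 0 := by
    linarith [G.sum_degree_neighborFinset_add_sum_compl v]
  rw [sum_eq_zero_iff_of_nonneg fun u hu => degree_sub_one_nonneg_of_mem_compl hG hu] at hR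
  exact_mod_cast sub_eq_zero.mp (hR u (by simp [huv, hvu]))

end DegreeSum

theorem sq_le_of_mem_spectrum_adjMatrix (hG : G.Connected) {μ : ℝ}
    (hμ : μ ∈ spectrum ℝ (G.adjMatrix ℝ)) :
    μ ^ 2 ≤ 2 * #G.edgeFinset - Fintype.card V + 1 := by
  obtain ⟨x, v, hx, hpos, hmax⟩ := exists_eigenvector_pos_max_of_mem_spectrum hμ
  exact (sq_le_sum_degree_of_forall_le hx hpos hmax).trans (sum_degree_neighborFinset_le hG v)

theorem exists_eq_starGraph_or_eq_top_of_sq_eq (hG : G.Connected) {μ : ℝ}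
    (hμ : μ ∈ spectrum ℝ (G.adjMatrix ℝ))
    (heq : μ ^ 2 = 2 * #G.edgeFinset - Fintype.card V + 1) :
    (∃ c, G = starGraph c) ∨ G = ⊤ := by
  obtain ⟨x, v₀, hx, hpos, hmax⟩ := exists_eigenvector_pos_max_of_mem_spectrum hμ
  have htight : ∀ v, x v = x v₀ →
      ∑ w ∈ G.neighborFinset v, (G.degree w : ℝ) = μ ^ 2 := by
    intro v hv
    have h₁ := sq_le_sum_degree_of_forall_le hx (hv ▸ hpos) (hv ▸ hmax)
    have h₂ := sum_degree_neighborFinset_le hG v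
    linarith
  refine exists_eq_starGraph_or_eq_top hG (S := {v | x v = x v₀}) rfl ?_ ?_
  · intro v hv w u hvw hwu
    exact (eq_of_adj_of_adj_of_sq_eq_sum_degree hx (hv ▸ hmax) (htight v hv).symm hvw
      hwu).trans hv
  · intro v hv u huv hvu
    exact degree_eq_one_of_sum_degree_neighborFinset_eq hG ((htight v hv).trans heq) huv hvu

theorem sqrt_mem_spectrum_adjMatrix_of_eq_starGraph_or_eq_top [Nonempty V]
    (h : (∃ c, G = starGraph c) ∨ G = ⊤) :
    √(2 * #G.edgeFinset - Fintype.card V + 1 : ℝ) ∈ spectrum ℝ (G.adjMatrix ℝ) := by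
  rcases h with ⟨c, rfl⟩ | rfl
  · have hm := congrArg (Nat.cast (R := ℝ)) (isTree_starGraph c).card_edgeFinset
    push_cast at hm
    convert sqrt_mem_spectrum_adjMatrix_starGraph c using 3
    linarith
  · convert sqrt_mem_spectrum_adjMatrix_top (V := V)

end SimpleGraph

/-- For a connected graph `G` with `n` vertices and `m` edges,
`ρ(G) ≤ √(2m − n + 1)`, with equality iff `G` is the star `K_{1,n−1}`
or the complete graph `K_n`. -/
theorem stmt_7 (n : ℕ) (G : SimpleGraph (Fin n)) (hG : G.Connected) (m : ℕ)
    (hm : m = G.edgeFinset.card) :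
    specRad (G.adjMatrix ℝ) ≤ Real.sqrt (2 * m - n + 1) ∧
      (specRad (G.adjMatrix ℝ) = Real.sqrt (2 * m - n + 1) ↔
        Nonempty (G ≃g completeBipartiteGraph (Fin 1) (Fin (n - 1))) ∨ G = ⊤) := by
  subst hm
  have : Nonempty (Fin n) := hG.nonempty
  have hcard : Fintype.card (Fin n) = Fintype.card (Fin 1 ⊕ Fin (n - 1)) := by
    have := Fin.pos_iff_nonempty.mpr hG.nonempty
    simp only [Fintype.card_fin, Fintype.card_sum]
    omega
  rw [completeBipartiteGraph_fin_one_eq_starGraph, nonempty_iso_starGraph_iff _ hcard]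
  have hbound := fun μ (hμ : μ ∈ spectrum ℝ (G.adjMatrix ℝ)) =>
    sq_le_of_mem_spectrum_adjMatrix hG hμ
  simp only [Fintype.card_fin] at hbound
  have hle : specRad (G.adjMatrix ℝ) ≤ √(2 * #G.edgeFinset - n + 1) :=
    Real.sSup_le (fun μ hμ => Real.le_sqrt_of_sq_le (hbound μ hμ)) (Real.sqrt_nonneg _)
  refine ⟨hle, fun heq => ?_, fun h => le_antisymm hle (le_specRad ?_)⟩
  · have hmem := specRad_mem_spectrum (G.isHermitian_adjMatrix ℝ)
    refine exists_eq_starGraph_or_eq_top_of_sq_eq hG hmem ?_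
    rw [Fintype.card_fin, heq, Real.sq_sqrt ((sq_nonneg _).trans (hbound _ hmem))]
  · simpa only [Fintype.card_fin] using sqrt_mem_spectrum_adjMatrix_of_eq_starGraph_or_eq_top h
end

section
/- The characteristic polynomial of the complete multipartite graph K_{n_1,…,n_k} of order n = n_1 + ⋯ + n_k equals x^{n−k} · (1 − Σ_{i=1}^{k} n_i/(x + n_i)) · Π_{i=1}^{k}(x + n_i). -/
/-!
Let `U` be the vertex–part incidence matrix, so that `xI - A = (xI + UUᵀ) - 𝟙𝟙ᵀ` and `UᵀU` is
the diagonal matrix of part sizes. By the Weinstein–Aronszajn identity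
`det (xI + UUᵀ) = x^N det (I + x⁻¹ UᵀU) = x^N ∏ᵢ (1 + nᵢ/x)`. The vector `w` with
`w_v = 1/(x + n_{part of v})` solves `(xI + UUᵀ) w = 𝟙`, so the rank-one correction multiplies
the determinant by `1 - 𝟙ᵀw = 1 - Σᵢ nᵢ/(x + nᵢ)`. Both sides are polynomials, so it is enough
to compare them at every `x > 0`.
-/

attribute [local instance] Classical.propDecidable

open Polynomial

open Matrix

theorem Matrix.det_add_vecMulVec_of_mulVec_eq {m R : Type*} [Fintype m] [DecidableEq m]
    [CommRing R] {B : Matrix m m R} {u w : m → R} (v : m → R) (h : B *ᵥ w = u) :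
    (B + vecMulVec u v).det = B.det * (1 + v ⬝ᵥ w) := by
  have hfactor : B + vecMulVec u v = B * (1 + vecMulVec w v) := by
    rw [Matrix.mul_add, Matrix.mul_one, mul_vecMulVec, h]
  rw [hfactor, det_mul, vecMulVec_eq Unit, det_one_add_replicateCol_mul_replicateRow]

theorem Matrix.det_smul_one_add_mul {m n K : Type*} [Fintype m] [DecidableEq m] [Fintype n]
    [DecidableEq n] [Field K] {x : K} (hx : x ≠ 0) (U : Matrix m n K) (V : Matrix n m K) :
    (x • 1 + U * V).det = x ^ Fintype.card m * (1 + x⁻¹ • (V * U)).det := by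
  have hscale : x • 1 + U * V = x • (1 + (x⁻¹ • U) * V) := by
    rw [smul_add, Matrix.smul_mul, smul_smul, mul_inv_cancel₀ hx, one_smul]
  rw [hscale, det_smul, det_one_add_mul_comm, Matrix.mul_smul]

theorem Fintype.sum_sigma_comp_fst {ι M : Type*} {β : ι → Type*} [Fintype ι] [∀ i, Fintype (β i)]
    [AddCommMonoid M] (g : ι → M) :
    ∑ a : Σ i, β i, g a.1 = ∑ i, Fintype.card (β i) • g i := by
  simp [Fintype.sum_sigma]

theorem Finset.prod_mul_one_sub_sum_div {ι K : Type*} [DecidableEq ι] [Field K] (s : Finset ι)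
    {a : ι → K} (c : ι → K) (ha : ∀ i ∈ s, a i ≠ 0) :
    (∏ i ∈ s, a i) * (1 - ∑ i ∈ s, c i / a i) =
      ∏ i ∈ s, a i - ∑ i ∈ s, c i * ∏ j ∈ s.erase i, a j := by
  rw [mul_sub, mul_one, Finset.mul_sum]
  congr 1
  refine Finset.sum_congr rfl fun i hi => ?_
  rw [← Finset.mul_prod_erase s a hi]
  field_simp [ha i hi]

theorem Fintype.pow_card_mul_prod_one_add_inv_mul {ι K : Type*} [Fintype ι] [Field K] {x : K}
    (hx : x ≠ 0) (c : ι → K) : x ^ Fintype.card ι * ∏ i, (1 + x⁻¹ * c i) = ∏ i, (x + c i) := by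
  rw [← Finset.card_univ, ← Finset.prod_const, ← Finset.prod_mul_distrib]
  refine Finset.prod_congr rfl fun i _ => ?_
  field_simp

section Multipartite

variable {ι : Type*} [Fintype ι] [DecidableEq ι] (β : ι → Type*)

def sigmaIncidence (R : Type*) [Zero R] [One R] : Matrix (Σ i, β i) ι R :=
  of fun a i => if a.1 = i then 1 else 0

variable {β} {R : Type*} [CommRing R]

theorem sigmaIncidence_mul_transpose :
    sigmaIncidence β R * (sigmaIncidence β R)ᵀ = of fun a b => if a.1 = b.1 then 1 else 0 := by
  ext a b
  simp [sigmaIncidence, mul_apply]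

theorem transpose_mul_sigmaIncidence [∀ i, Fintype (β i)] :
    (sigmaIncidence β R)ᵀ * sigmaIncidence β R = diagonal fun i => (Fintype.card (β i) : R) := by
  ext i j
  rcases eq_or_ne i j with rfl | hij
  · simp [sigmaIncidence, mul_apply, Fintype.sum_sigma]
  · simp [sigmaIncidence, mul_apply, Fintype.sum_sigma, hij, Ne.symm hij]

theorem sigmaIncidence_mulVec (y : ι → R) : sigmaIncidence β R *ᵥ y = fun a => y a.1 := by
  ext a
  simp [sigmaIncidence, mulVec, dotProduct]

theorem transpose_sigmaIncidence_mulVec [∀ i, Fintype (β i)] (g : ι → R) :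
    (sigmaIncidence β R)ᵀ *ᵥ (fun a => g a.1) = fun i => Fintype.card (β i) • g i := by
  ext i
  simp [sigmaIncidence, mulVec, dotProduct, Fintype.sum_sigma]

theorem adjMatrix_completeMultipartiteGraph
    [DecidableRel (SimpleGraph.completeMultipartiteGraph β).Adj] :
    (SimpleGraph.completeMultipartiteGraph β).adjMatrix R =
      vecMulVec 1 1 - sigmaIncidence β R * (sigmaIncidence β R)ᵀ := by
  ext a b
  by_cases h : a.1 = b.1 <;> simp [sigmaIncidence_mul_transpose, h]

variable [∀ i, Fintype (β i)] {K : Type*} [Field K] [DecidableEq (Σ i, β i)] {x : K}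

theorem det_smul_one_add_sigmaIncidence_mul_transpose (hx : x ≠ 0) :
    (x • 1 + sigmaIncidence β K * (sigmaIncidence β K)ᵀ).det =
      x ^ Fintype.card (Σ i, β i) * ∏ i, (1 + x⁻¹ * Fintype.card (β i)) := by
  rw [det_smul_one_add_mul hx, transpose_mul_sigmaIncidence, ← diagonal_smul, ← diagonal_one,
    diagonal_add, det_diagonal]
  rfl

theorem smul_one_add_sigmaIncidence_mul_transpose_mulVec
    (hxβ : ∀ i, x + Fintype.card (β i) ≠ 0) :
    (x • 1 + sigmaIncidence β K * (sigmaIncidence β K)ᵀ) *ᵥ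
      (fun a => (x + Fintype.card (β a.1))⁻¹) = 1 := by
  rw [add_mulVec, smul_mulVec, one_mulVec, ← mulVec_mulVec,
    transpose_sigmaIncidence_mulVec fun i => (x + Fintype.card (β i) : K)⁻¹,
    sigmaIncidence_mulVec]
  ext a
  simp only [Pi.add_apply, Pi.smul_apply, nsmul_eq_mul, smul_eq_mul, Pi.one_apply]
  rw [← add_mul, mul_inv_cancel₀ (hxβ a.1)]

theorem det_scalar_sub_adjMatrix_completeMultipartiteGraph
    [DecidableRel (SimpleGraph.completeMultipartiteGraph β).Adj]
    (hx : x ≠ 0) (hxβ : ∀ i, x + Fintype.card (β i) ≠ 0) :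
    (scalar _ x - (SimpleGraph.completeMultipartiteGraph β).adjMatrix K).det =
      x ^ Fintype.card (Σ i, β i) * (∏ i, (1 + x⁻¹ * Fintype.card (β i))) *
        (1 - ∑ i, Fintype.card (β i) / (x + Fintype.card (β i))) := by
  have hsplit : scalar _ x - (SimpleGraph.completeMultipartiteGraph β).adjMatrix K =
      (x • 1 + sigmaIncidence β K * (sigmaIncidence β K)ᵀ) + vecMulVec 1 (-1) := by
    rw [adjMatrix_completeMultipartiteGraph, scalar_apply, ← smul_one_eq_diagonal, vecMulVec_neg]
    abel
  have hsum : (1 : (Σ i, β i) → K) ⬝ᵥ (fun a => (x + Fintype.card (β a.1))⁻¹) =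
      ∑ i, Fintype.card (β i) / (x + Fintype.card (β i)) := by
    rw [one_dotProduct, Fintype.sum_sigma_comp_fst fun i => (x + Fintype.card (β i))⁻¹]
    simp [div_eq_mul_inv]
  rw [hsplit, det_add_vecMulVec_of_mulVec_eq (-1)
      (smul_one_add_sigmaIncidence_mul_transpose_mulVec hxβ),
    det_smul_one_add_sigmaIncidence_mul_transpose hx, neg_dotProduct, hsum, sub_eq_add_neg]

end Multipartite

/-- The characteristic polynomial of the complete multipartite graph `K_{n₁,…,n_k}` of
order `N = n₁ + ⋯ + n_k` equals
`x^{N−k}·(∏ᵢ (x + nᵢ) − Σᵢ nᵢ·∏_{j≠i} (x + n_j))`, which is the expanded form of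
`x^{N−k}·(1 − Σᵢ nᵢ/(x+nᵢ))·∏ᵢ (x + nᵢ)`. -/
theorem stmt_10 (k : ℕ) (n : Fin k → ℕ) (hn : ∀ i, 1 ≤ n i) :
    ((SimpleGraph.completeMultipartiteGraph fun i => Fin (n i)).adjMatrix ℝ).charpoly =
      X ^ ((∑ i, n i) - k) *
        (∏ i, (X + C (n i : ℝ)) -
          ∑ i, C (n i : ℝ) * ∏ j ∈ Finset.univ.erase i, (X + C (n j : ℝ))) := by
  have hk : k ≤ ∑ i, n i := by simpa using Finset.card_nsmul_le_sum Finset.univ n 1 fun i _ => hn i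
  apply eq_of_infinite_eval_eq
  refine (Set.Ioi_infinite 0).mono fun x (hx : 0 < x) => ?_
  have hxn : ∀ i, x + n i ≠ 0 := fun i => by positivity
  have hpow : x ^ (∑ i, n i) * ∏ i, (1 + x⁻¹ * n i) = x ^ ((∑ i, n i) - k) * ∏ i, (x + n i) := by
    rw [← Fintype.pow_card_mul_prod_one_add_inv_mul hx.ne', Fintype.card_fin, ← mul_assoc,
      ← pow_add, Nat.sub_add_cancel hk]
  simp only [Set.mem_ofPred_eq, eval_charpoly, eval_mul, eval_pow, eval_X, eval_sub, eval_prod,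
    eval_finsetSum, eval_add, eval_C]
  rw [det_scalar_sub_adjMatrix_completeMultipartiteGraph hx.ne' (by simpa using hxn)]
  simp only [Fintype.card_sigma, Fintype.card_fin]
  rw [hpow, mul_assoc, Finset.prod_mul_one_sub_sum_div _ _ fun i _ => hxn i]
end

section
/- Let G be a connected graph, v₁, v₂ two vertices of G, and u₁,…,u_t vertices in N(v₁)∖(N(v₂)∪{v₂}). Let G' be the graph obtained from G by replacing each edge v₁uᵢ with the edge v₂uᵢ (i = 1,…,t, t ≥ 1). If x is the Perron eigenvector of G and x_{v₁} ≤ x_{v₂}, then ρ(G') > ρ(G). -/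
attribute [local instance] Classical.propDecidable

open Matrix

/-!
Write `A, A'` for the adjacency matrices of `G, G'` and `S = {u₁, …, u_t}`. A direct count gives
`xᵀ A' x = xᵀ A x + 2 (x v₂ - x v₁) ∑_{w ∈ S} x w ≥ ρ(G)`, so the Rayleigh principle yields
`ρ(G') ≥ ρ(G)`. Equality would force `x` to attain the Rayleigh maximum for `A'`, hence to be an
eigenvector of `A'` for `ρ(G)`; but at `v₁` we have `(A' x) v₁ = ρ(G) x v₁ - ∑_{w ∈ S} x w`,
and this sum is positive.
-/

open scoped MatrixOrder

namespace Matrix.IsHermitian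

variable {V : Type*} [Fintype V] [DecidableEq V] {A : Matrix V V ℝ}

lemma le_specRad (hA : A.IsHermitian) {r : ℝ} (hr : r ∈ spectrum ℝ A) : r ≤ specRad A :=
  le_csSup (hA.spectrum_real_eq_range_eigenvalues ▸ Set.finite_range _).bddAbove hr

lemma posSemidef_specRad_smul_one_sub (hA : A.IsHermitian) :
    (specRad A • 1 - A).PosSemidef := by
  have : A ≤ algebraMap ℝ (Matrix V V ℝ) (specRad A) :=
    le_algebraMap_of_spectrum_le (fun _ hr => hA.le_specRad hr) hA.isSelfAdjoint
  simpa [Matrix.le_iff, Algebra.algebraMap_eq_smul_one] using this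

lemma dotProduct_mulVec_le_specRad (hA : A.IsHermitian) {y : V → ℝ} (hy : y ⬝ᵥ y = 1) :
    y ⬝ᵥ A *ᵥ y ≤ specRad A := by
  have := hA.posSemidef_specRad_smul_one_sub.dotProduct_mulVec_nonneg y
  simpa [sub_mulVec, dotProduct_sub, smul_mulVec, hy] using this

lemma mulVec_eq_specRad_smul_of_dotProduct_mulVec_eq (hA : A.IsHermitian) {y : V → ℝ}
    (hy : y ⬝ᵥ y = 1) (h : y ⬝ᵥ A *ᵥ y = specRad A) : A *ᵥ y = specRad A • y := by
  have := (hA.posSemidef_specRad_smul_one_sub.dotProduct_mulVec_zero_iff y).1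
    (by simp [sub_mulVec, dotProduct_sub, smul_mulVec, hy, h])
  rw [sub_mulVec, sub_eq_zero] at this
  simpa [smul_mulVec] using this.symm

end Matrix.IsHermitian

namespace SimpleGraph

variable {V : Type*} (G : SimpleGraph V)

def rotate (a b : V) (S : Finset V) : SimpleGraph V :=
  G.deleteEdges {e | ∃ w ∈ S, e = s(a, w)} ⊔ fromEdgeSet {e | ∃ w ∈ S, e = s(b, w)}

variable {G} {a b : V} {S : Finset V}

lemma rotate_adj {v w : V} :
    (G.rotate a b S).Adj v w ↔ G.Adj v w ∧ ¬(v = a ∧ w ∈ S ∨ w = a ∧ v ∈ S) ∨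
      (v = b ∧ w ∈ S ∨ w = b ∧ v ∈ S) ∧ v ≠ w := by
  simp only [rotate, sup_adj, deleteEdges_adj, fromEdgeSet_adj, Set.mem_ofPred_eq, Sym2.eq_iff]
  grind

variable [DecidableEq V]

lemma adjMatrix_rotate_apply (ha : ∀ w ∈ S, G.Adj a w) (hb : ∀ w ∈ S, ¬ G.Adj b w)
    (hbS : b ∉ S) (v w : V) :
    (G.rotate a b S).adjMatrix ℝ v w = G.adjMatrix ℝ v w
      + ((if v = b ∧ w ∈ S then 1 else 0) + (if w = b ∧ v ∈ S then 1 else 0))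
      - ((if v = a ∧ w ∈ S then 1 else 0) + (if w = a ∧ v ∈ S then 1 else 0)) := by
  have haS : a ∉ S := fun h => (ha a h).ne rfl
  simp only [adjMatrix_apply, rotate_adj]
  split_ifs <;> grind [G.adj_comm, G.loopless]

variable [Fintype V]

lemma rotate_adjMatrix_mulVec_apply (ha : ∀ w ∈ S, G.Adj a w) (hb : ∀ w ∈ S, ¬ G.Adj b w)
    (hbS : b ∉ S) (x : V → ℝ) (v : V) :
    ((G.rotate a b S).adjMatrix ℝ *ᵥ x) v = (G.adjMatrix ℝ *ᵥ x) v
      + ((if v = b then ∑ w ∈ S, x w else 0) + (if v ∈ S then x b else 0))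
      - ((if v = a then ∑ w ∈ S, x w else 0) + (if v ∈ S then x a else 0)) := by
  simp only [mulVec, dotProduct, adjMatrix_rotate_apply ha hb hbS, add_mul, sub_mul,
    Finset.sum_add_distrib, Finset.sum_sub_distrib, ite_and, ite_mul, one_mul, zero_mul]
  simp [Finset.sum_ite_mem, Finset.sum_ite_eq']

lemma rotate_adjMatrix_mulVec_apply_left (ha : ∀ w ∈ S, G.Adj a w)
    (hb : ∀ w ∈ S, ¬ G.Adj b w) (hbS : b ∉ S) (hab : a ≠ b) (x : V → ℝ) :
    ((G.rotate a b S).adjMatrix ℝ *ᵥ x) a = (G.adjMatrix ℝ *ᵥ x) a - ∑ w ∈ S, x w := by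
  have haS : a ∉ S := fun h => (ha a h).ne rfl
  simp [rotate_adjMatrix_mulVec_apply ha hb hbS, hab, haS]

lemma dotProduct_rotate_adjMatrix_mulVec (ha : ∀ w ∈ S, G.Adj a w)
    (hb : ∀ w ∈ S, ¬ G.Adj b w) (hbS : b ∉ S) (x : V → ℝ) :
    x ⬝ᵥ (G.rotate a b S).adjMatrix ℝ *ᵥ x
      = x ⬝ᵥ G.adjMatrix ℝ *ᵥ x + 2 * (x b - x a) * ∑ w ∈ S, x w := by
  simp only [dotProduct, rotate_adjMatrix_mulVec_apply ha hb hbS, mul_add, mul_sub,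
    Finset.sum_add_distrib, Finset.sum_sub_distrib, mul_ite, mul_zero]
  simp only [Finset.sum_ite_mem, Finset.sum_ite_eq', Finset.univ_inter, Finset.mem_univ,
    if_true]
  rw [← Finset.sum_mul, ← Finset.sum_mul]
  ring

end SimpleGraph

theorem stmt_13_general {V : Type*} [Fintype V] [DecidableEq V] (G : SimpleGraph V)
    (v₁ v₂ : V) (t : ℕ) (ht : 1 ≤ t) (u : Fin t → V)
    (hu₁ : ∀ i, G.Adj v₁ (u i)) (hu₂ : ∀ i, ¬ G.Adj v₂ (u i)) (hu₃ : ∀ i, u i ≠ v₂)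
    (G' : SimpleGraph V)
    (hG' : G' = (G.deleteEdges {e | ∃ i, e = Sym2.mk v₁ (u i)}) ⊔
        SimpleGraph.fromEdgeSet {e | ∃ i, e = Sym2.mk v₂ (u i)})
    (x : V → ℝ) (hxpos : ∀ v, 0 < x v) (hxunit : ∑ v, x v ^ 2 = 1)
    (hxeig : G.adjMatrix ℝ *ᵥ x = specRad (G.adjMatrix ℝ) • x)
    (hx12 : x v₁ ≤ x v₂) :
    specRad (G.adjMatrix ℝ) < specRad (G'.adjMatrix ℝ) := by
  set S := Finset.univ.image u
  have hrot : G' = G.rotate v₁ v₂ S := by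
    simp only [hG', SimpleGraph.rotate, S, Finset.mem_image, Finset.mem_univ, true_and]
    congr! 4 <;> grind
  subst hrot
  have ha : ∀ w ∈ S, G.Adj v₁ w := by simpa [S] using hu₁
  have hb : ∀ w ∈ S, ¬ G.Adj v₂ w := by simpa [S] using hu₂
  have hbS : v₂ ∉ S := by simpa [S] using hu₃
  have hab : v₁ ≠ v₂ := fun h => hu₂ ⟨0, ht⟩ (h ▸ hu₁ ⟨0, ht⟩)
  have hsum : 0 < ∑ w ∈ S, x w :=
    Finset.sum_pos (fun w _ => hxpos w) ⟨u ⟨0, ht⟩, by simp [S]⟩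
  have hx : x ⬝ᵥ x = 1 := by simpa [dotProduct, sq] using hxunit
  have hρ : x ⬝ᵥ G.adjMatrix ℝ *ᵥ x = specRad (G.adjMatrix ℝ) := by
    rw [hxeig, dotProduct_smul, hx, smul_eq_mul, mul_one]
  have hquad : specRad (G.adjMatrix ℝ) ≤ x ⬝ᵥ (G.rotate v₁ v₂ S).adjMatrix ℝ *ᵥ x := by
    rw [SimpleGraph.dotProduct_rotate_adjMatrix_mulVec ha hb hbS, hρ]
    exact le_add_of_nonneg_right (mul_nonneg (by linarith) hsum.le)
  have hA' := (G.rotate v₁ v₂ S).isHermitian_adjMatrix ℝ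
  refine (hquad.trans (hA'.dotProduct_mulVec_le_specRad hx)).lt_of_ne fun heq => ?_
  have heig := hA'.mulVec_eq_specRad_smul_of_dotProduct_mulVec_eq hx
    (le_antisymm (hA'.dotProduct_mulVec_le_specRad hx) (heq ▸ hquad))
  have hv₁ := congrFun heig v₁
  rw [SimpleGraph.rotate_adjMatrix_mulVec_apply_left ha hb hbS hab, hxeig, ← heq] at hv₁
  simp only [Pi.smul_apply, smul_eq_mul] at hv₁
  linarith

/-- Rotation lemma: let `G` be connected, `u 1, …, u t` distinct vertices of
`N(v₁) \ (N(v₂) ∪ {v₂})`, and let `G'` be obtained from `G` by replacing each edge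
`v₁ (u i)` with `v₂ (u i)`. If `x` is the Perron eigenvector of `G` and
`x v₁ ≤ x v₂`, then `ρ(G') > ρ(G)`. -/
theorem stmt_13 {V : Type*} [Fintype V] [DecidableEq V] (G : SimpleGraph V)
    (hG : G.Connected) (v₁ v₂ : V) (t : ℕ) (ht : 1 ≤ t) (u : Fin t → V)
    (hu : Function.Injective u)
    (hu₁ : ∀ i, G.Adj v₁ (u i)) (hu₂ : ∀ i, ¬ G.Adj v₂ (u i)) (hu₃ : ∀ i, u i ≠ v₂)
    (G' : SimpleGraph V)
    (hG' : G' = (G.deleteEdges {e | ∃ i, e = Sym2.mk v₁ (u i)}) ⊔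
        SimpleGraph.fromEdgeSet {e | ∃ i, e = Sym2.mk v₂ (u i)})
    (x : V → ℝ) (hxpos : ∀ v, 0 < x v) (hxunit : ∑ v, x v ^ 2 = 1)
    (hxeig : G.adjMatrix ℝ *ᵥ x = specRad (G.adjMatrix ℝ) • x)
    (hx12 : x v₁ ≤ x v₂) :
    specRad (G.adjMatrix ℝ) < specRad (G'.adjMatrix ℝ) :=
  stmt_13_general G v₁ v₂ t ht u hu₁ hu₂ hu₃ G' hG' x hxpos hxunit hxeig hx12
end
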